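/- arXiv:1912.01366 — 3 statements merged into one kernel-verified Lean document; each statement's English description precedes it below -/
import Mathlib

section
/- Helffer–Sjöstrand representation formula: for all Y, Y' ∈ L²(Ω), Cov[Y, Y'] = Σ_j E[(D_j Y) T(D_j Y')], where T is the pseudo-inverse of the Glauber Laplacian. -/
open MeasureTheory ProbabilityTheory Finset

noncomputable section

variable {ι : Type} [Fintype ι] [DecidableEq ι]
  {Z : ι → Type} [∀ i, MeasurableSpace (Z i)]

/-- The Glauber derivative `D_j Y := Y - E_j[Y]`. -/
def glauberD (μ : ∀ i, Measure (Z i)) (j : ι) (Y : (∀ i, Z i) → ℝ) : (∀ i, Z i) → ℝ :=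
  fun ω => Y ω - ∫ z, Y (Function.update ω j z) ∂(μ j)

/-- Partial expectation `E_T` integrating out the variables with index in `T`. -/
def partialE (μ : ∀ i, Measure (Z i)) [∀ i, IsProbabilityMeasure (μ i)] (T : Finset ι)
    (Y : (∀ i, Z i) → ℝ) : (∀ i, Z i) → ℝ :=
  fun ω => ∫ ζ : (∀ j : T, Z j),
    Y (fun i => if h : i ∈ T then ζ ⟨i, h⟩ else ω i) ∂(Measure.pi fun j : T => μ j)

/-- The operator `(∏_{j∈J} D_j)(∏_{j∉J} E_j) = ∑_{S ⊆ J} (-1)^{|S|} E_{S ∪ Jᶜ}`. -/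
def glauberPiJ (μ : ∀ i, Measure (Z i)) [∀ i, IsProbabilityMeasure (μ i)] (J : Finset ι)
    (Y : (∀ i, Z i) → ℝ) : (∀ i, Z i) → ℝ :=
  fun ω => ∑ S ∈ J.powerset, (-1 : ℝ) ^ S.card * partialE μ (S ∪ Jᶜ) Y ω

/-- The projection `π_n` onto the `n`-th Glauber chaos. -/
def glauberPi (μ : ∀ i, Measure (Z i)) [∀ i, IsProbabilityMeasure (μ i)] (n : ℕ)
    (Y : (∀ i, Z i) → ℝ) : (∀ i, Z i) → ℝ :=
  fun ω => ∑ J ∈ Finset.univ.powerset.filter (fun J : Finset ι => J.card = n),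
    glauberPiJ μ J Y ω

/-- The pseudo-inverse `T := ∑_{n ≥ 1} (1/n) π_n` of the Glauber Laplacian. -/
def glauberT (μ : ∀ i, Measure (Z i)) [∀ i, IsProbabilityMeasure (μ i)]
    (Y : (∀ i, Z i) → ℝ) : (∀ i, Z i) → ℝ :=
  fun ω => ∑ n ∈ Finset.Icc 1 (Fintype.card ι), (n : ℝ)⁻¹ * glauberPi μ n Y ω

/-!
The operators `π_J = (∏_{j ∈ J} D_j)(∏_{j ∉ J} E_j)` form the Hoeffding (Efron–Stein)
decomposition: by Möbius inversion on the lattice of subsets `∑_J π_J = id`, and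
`π_∅ = E`. Moreover `E_j π_J = 0` and `π_J D_j = π_J` for `j ∈ J`, while `π_J D_j = 0` for
`j ∉ J`. Hence `T D_j Y' = ∑_{J ∋ j} |J|⁻¹ π_J Y'` and `E[D_j Y · π_J Y'] = E[Y · π_J Y']`
for `j ∈ J`. Summing over `j` counts each `J ≠ ∅` exactly `|J|` times, which leaves
`∑_{J ≠ ∅} E[Y · π_J Y'] = E[Y Y'] - E[Y] E[Y']`.
-/

section

variable {α : Type*} [MeasurableSpace α] {f g : α → ℝ}

/-- The bound is pointwise rather than almost everywhere, so that every section
`ω' ↦ f (S.piecewise ω' ω)` is integrable, for each fixed `ω`. -/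
def BoundedMeasurable (f : α → ℝ) : Prop :=
  Measurable f ∧ ∃ M, ∀ x, |f x| ≤ M

namespace BoundedMeasurable

lemma integrable {ν : Measure α} [IsFiniteMeasure ν] (hf : BoundedMeasurable f) :
    Integrable f ν := by
  obtain ⟨hm, M, hM⟩ := hf
  exact (integrable_const M).mono' hm.aestronglyMeasurable
    (.of_forall fun x => (Real.norm_eq_abs _).trans_le (hM x))

lemma comp {β : Type*} [MeasurableSpace β] (hf : BoundedMeasurable f) {φ : β → α}
    (hφ : Measurable φ) : BoundedMeasurable (fun y => f (φ y)) :=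
  ⟨hf.1.comp hφ, hf.2.imp fun _ hM y => hM (φ y)⟩

lemma const (c : ℝ) : BoundedMeasurable (fun _ : α => c) :=
  ⟨measurable_const, |c|, fun _ => le_rfl⟩

lemma add (hf : BoundedMeasurable f) (hg : BoundedMeasurable g) :
    BoundedMeasurable (fun x => f x + g x) := by
  obtain ⟨hfm, M, hM⟩ := hf
  obtain ⟨hgm, N, hN⟩ := hg
  exact ⟨hfm.add hgm, M + N, fun x => (abs_add_le _ _).trans (add_le_add (hM x) (hN x))⟩

lemma sub (hf : BoundedMeasurable f) (hg : BoundedMeasurable g) :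
    BoundedMeasurable (fun x => f x - g x) := by
  obtain ⟨hfm, M, hM⟩ := hf
  obtain ⟨hgm, N, hN⟩ := hg
  exact ⟨hfm.sub hgm, M + N, fun x => (abs_sub _ _).trans (add_le_add (hM x) (hN x))⟩

lemma mul (hf : BoundedMeasurable f) (hg : BoundedMeasurable g) :
    BoundedMeasurable (fun x => f x * g x) := by
  obtain ⟨hfm, M, hM⟩ := hf
  obtain ⟨hgm, N, hN⟩ := hg
  refine ⟨hfm.mul hgm, M * N, fun x => ?_⟩
  rw [abs_mul]
  exact mul_le_mul (hM x) (hN x) (abs_nonneg _) ((abs_nonneg _).trans (hM x))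

lemma finset_sum {κ : Type*} (s : Finset κ) {F : κ → α → ℝ}
    (hF : ∀ k ∈ s, BoundedMeasurable (F k)) : BoundedMeasurable (fun x => ∑ k ∈ s, F k x) := by
  induction s using Finset.cons_induction with
  | empty => simpa using const 0
  | cons k s hk ih =>
    simp_rw [sum_cons]
    exact (hF k (mem_cons_self k s)).add (ih fun k' hk' => hF k' (mem_cons_of_mem hk'))

end BoundedMeasurable

end

lemma Measurable.finset_piecewise {α κ : Type*} [MeasurableSpace α] {X : κ → Type*}
    [∀ k, MeasurableSpace (X k)] [DecidableEq κ] (S : Finset κ) {f g : α → ∀ k, X k}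
    (hf : Measurable f) (hg : Measurable g) :
    Measurable (fun x => S.piecewise (f x) (g x)) := by
  refine measurable_pi_lambda _ fun i => ?_
  by_cases hi : i ∈ S
  · simpa [hi] using measurable_pi_iff.1 hf i
  · simpa [hi] using measurable_pi_iff.1 hg i

lemma BoundedMeasurable.comp_finset_piecewise {κ : Type*} {X : κ → Type*}
    [∀ k, MeasurableSpace (X k)] [DecidableEq κ] (S : Finset κ) {f : (∀ k, X k) → ℝ}
    (hf : BoundedMeasurable f) (ω : ∀ k, X k) :
    BoundedMeasurable (fun ω' => f (S.piecewise ω' ω)) :=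
  hf.comp (measurable_id.finset_piecewise S measurable_const)

section IntegrateOut

variable (μ : ∀ i, Measure (Z i)) {f g : (∀ i, Z i) → ℝ}

/-- The partial expectation `E_S`, realised by resampling the coordinates in `S` from an
independent copy `ω'`. Unlike `partialE` it integrates against the full product measure, so that
`E_T E_S = E_{S ∪ T}` is a matter of Fubini. -/
def integrateOut (S : Finset ι) (f : (∀ i, Z i) → ℝ) (ω : ∀ i, Z i) : ℝ :=
  ∫ ω', f (S.piecewise ω' ω) ∂Measure.pi μ

lemma integrateOut_univ (f : (∀ i, Z i) → ℝ) (ω : ∀ i, Z i) :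
    integrateOut μ univ f ω = ∫ ω', f ω' ∂Measure.pi μ := by
  simp [integrateOut]

lemma integrateOut_mul_left (S : Finset ι) (f g : (∀ i, Z i) → ℝ) :
    integrateOut μ S (fun η => integrateOut μ S f η * g η)
      = fun ω => integrateOut μ S f ω * integrateOut μ S g ω := by
  funext ω
  simp only [integrateOut, piecewise_piecewise_of_subset_right subset_rfl]
  exact integral_const_mul _ _

variable [∀ i, IsProbabilityMeasure (μ i)]

lemma measurePreserving_finset_piecewise (S : Finset ι) :
    MeasurePreserving (fun p : (∀ i, Z i) × (∀ i, Z i) => S.piecewise p.2 p.1)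
      ((Measure.pi μ).prod (Measure.pi μ)) (Measure.pi μ) := by
  have hm : Measurable (fun p : (∀ i, Z i) × (∀ i, Z i) => S.piecewise p.2 p.1) :=
    measurable_snd.finset_piecewise S measurable_fst
  refine ⟨hm, (Measure.pi_eq fun s hs => ?_).symm⟩
  have hpre : (fun p : (∀ i, Z i) × (∀ i, Z i) => S.piecewise p.2 p.1) ⁻¹' Set.univ.pi s
      = Set.univ.pi (fun i => if i ∈ S then Set.univ else s i)
        ×ˢ Set.univ.pi (fun i => if i ∈ S then s i else Set.univ) := by
    ext p
    simp only [Set.mem_preimage, Set.mem_pi, Set.mem_univ, true_implies, Set.mem_prod,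
      ← forall_and]
    refine forall_congr' fun i => ?_
    by_cases hi : i ∈ S <;> simp [hi]
  rw [Measure.map_apply hm (.univ_pi hs), hpre, Measure.prod_prod, Measure.pi_pi,
    Measure.pi_pi, ← prod_mul_distrib]
  refine prod_congr rfl fun i _ => ?_
  by_cases hi : i ∈ S <;> simp [hi]

lemma boundedMeasurable_integrateOut (S : Finset ι) (hf : BoundedMeasurable f) :
    BoundedMeasurable (integrateOut μ S f) := by
  obtain ⟨hm, M, hM⟩ := hf
  refine ⟨(hm.comp (measurable_snd.finset_piecewise S measurable_fst)).stronglyMeasurable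
    |>.integral_prod_right'.measurable, M, fun ω => ?_⟩
  simpa [integrateOut] using norm_integral_le_of_norm_le_const (μ := Measure.pi μ)
    (.of_forall fun ω' => (Real.norm_eq_abs _).trans_le (hM (S.piecewise ω' ω)))

lemma integrateOut_empty (f : (∀ i, Z i) → ℝ) : integrateOut μ ∅ f = f := by
  funext ω
  simp [integrateOut]

lemma integrateOut_sub (S : Finset ι) (hf : BoundedMeasurable f) (hg : BoundedMeasurable g)
    (ω : ∀ i, Z i) :
    integrateOut μ S (fun η => f η - g η) ω = integrateOut μ S f ω - integrateOut μ S g ω :=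
  integral_sub (hf.comp_finset_piecewise S ω).integrable (hg.comp_finset_piecewise S ω).integrable

lemma integral_integrateOut (S : Finset ι) (hf : BoundedMeasurable f) :
    ∫ ω, integrateOut μ S f ω ∂Measure.pi μ = ∫ ω, f ω ∂Measure.pi μ := by
  have hmp := measurePreserving_finset_piecewise μ S
  unfold integrateOut
  rw [← integral_prod _ (hf.comp hmp.measurable).integrable]
  have h := integral_map (f := f) hmp.measurable.aemeasurable
    (by rw [hmp.map_eq]; exact hf.1.aestronglyMeasurable)
  rw [hmp.map_eq] at h
  exact h.symm

lemma integrateOut_integrateOut (S T : Finset ι) (hf : BoundedMeasurable f) :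
    integrateOut μ T (integrateOut μ S f) = integrateOut μ (S ∪ T) f := by
  funext ω
  have hmerge : ∀ ω' ω'' : ∀ i, Z i, S.piecewise ω'' (T.piecewise ω' ω)
      = (S ∪ T).piecewise (S.piecewise ω'' ω') ω := by
    intro ω' ω''
    funext i
    by_cases hS : i ∈ S <;> by_cases hT : i ∈ T <;> simp [hS, hT]
  simp only [integrateOut, hmerge]
  exact integral_integrateOut μ S (hf.comp_finset_piecewise (S ∪ T) ω)

lemma integral_integrateOut_mul (S : Finset ι) (hf : BoundedMeasurable f)
    (hg : BoundedMeasurable g) :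
    ∫ ω, integrateOut μ S f ω * g ω ∂Measure.pi μ
      = ∫ ω, integrateOut μ S f ω * integrateOut μ S g ω ∂Measure.pi μ := by
  rw [← integral_integrateOut μ S ((boundedMeasurable_integrateOut μ S hf).mul hg),
    integrateOut_mul_left]

lemma integral_integrateOut_mul_comm (S : Finset ι) (hf : BoundedMeasurable f)
    (hg : BoundedMeasurable g) :
    ∫ ω, integrateOut μ S f ω * g ω ∂Measure.pi μ
      = ∫ ω, f ω * integrateOut μ S g ω ∂Measure.pi μ := by
  simp_rw [integral_integrateOut_mul μ S hf hg, mul_comm (f _),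
    integral_integrateOut_mul μ S hg hf, mul_comm]

lemma partialE_eq_integrateOut (T : Finset ι) (hf : Measurable f) :
    partialE μ T f = integrateOut μ T f := by
  funext ω
  have h := integral_restrict_infinitePi μ (f := fun ζ => f (Function.updateFinset ω T ζ))
    (hf.comp measurable_updateFinset).aestronglyMeasurable
  rw [Measure.infinitePi_eq_pi] at h
  refine h.symm.trans (integral_congr_ae (.of_forall fun ω' => congrArg f (funext fun i => ?_)))
  by_cases hi : i ∈ T <;> simp [Function.updateFinset, hi]

lemma glauberD_eq_sub_integrateOut (j : ι) (hf : Measurable f) :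
    glauberD μ j f = fun ω => f ω - integrateOut μ {j} f ω := by
  funext ω
  rw [glauberD, integrateOut, ← integral_comp_eval (i := j) (μ := μ)
    (f := fun z => f (Function.update ω j z)) (hf.comp (measurable_update ω)).aestronglyMeasurable]
  simp_rw [piecewise_singleton]

end IntegrateOut

section HoeffdingTerm

def hoeffdingTerm (h : Finset ι → ℝ) (J : Finset ι) : ℝ :=
  ∑ S ∈ J.powerset, (-1) ^ #S * h (S ∪ Jᶜ)

lemma hoeffdingTerm_empty (h : Finset ι → ℝ) : hoeffdingTerm h ∅ = h univ := by
  simp [hoeffdingTerm]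

lemma hoeffdingTerm_sub (h h' : Finset ι → ℝ) (J : Finset ι) :
    hoeffdingTerm (fun U => h U - h' U) J = hoeffdingTerm h J - hoeffdingTerm h' J := by
  simp only [hoeffdingTerm, mul_sub, sum_sub_distrib]

lemma hoeffdingTerm_insert_of_mem (h : Finset ι → ℝ) {J : Finset ι} {j : ι} (hj : j ∈ J) :
    hoeffdingTerm (fun U => h (insert j U)) J = 0 := by
  obtain ⟨J', hj', rfl⟩ : ∃ J', j ∉ J' ∧ insert j J' = J :=
    ⟨J.erase j, notMem_erase j J, insert_erase hj⟩
  rw [hoeffdingTerm, sum_powerset_insert hj', ← sum_add_distrib]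
  refine sum_eq_zero fun S hS => ?_
  have hjS : j ∉ S := fun h => hj' (mem_powerset.1 hS h)
  rw [card_insert_of_notMem hjS, insert_union, insert_idem, pow_succ]
  ring

lemma hoeffdingTerm_insert_of_notMem (h : Finset ι → ℝ) {J : Finset ι} {j : ι} (hj : j ∉ J) :
    hoeffdingTerm (fun U => h (insert j U)) J = hoeffdingTerm h J :=
  sum_congr rfl fun S _ => by simp only [insert_eq_of_mem (mem_union_right S (mem_compl.2 hj))]

lemma sum_hoeffdingTerm (h : Finset ι → ℝ) : ∑ J, hoeffdingTerm h J = h ∅ := by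
  -- Reindex by `A = S ∪ Jᶜ`: the alternating sum over `S ⊆ A` vanishes unless `A = ∅`.
  have hreindex : ∑ J : Finset ι, ∑ S ∈ J.powerset, (-1 : ℝ) ^ #S * h (S ∪ Jᶜ)
      = ∑ A : Finset ι, ∑ S ∈ A.powerset, (-1 : ℝ) ^ #S * h A := by
    simp only [sum_sigma']
    refine sum_nbij' (fun p => ⟨p.2 ∪ p.1ᶜ, p.2⟩) (fun p => ⟨(p.1 \ p.2)ᶜ, p.2⟩)
      ?_ ?_ ?_ ?_ fun _ _ => rfl
    · intro p hp
      simp only [mem_sigma, mem_univ, mem_powerset, true_and] at hp ⊢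
      exact subset_union_left
    · intro p hp
      simp only [mem_sigma, mem_univ, mem_powerset, true_and] at hp ⊢
      intro x hx
      simp [hx]
    · rintro ⟨J, S⟩ hp
      simp only [mem_sigma, mem_univ, mem_powerset, true_and] at hp
      show (⟨((S ∪ Jᶜ) \ S)ᶜ, S⟩ : Σ _ : Finset ι, Finset ι) = ⟨J, S⟩
      congr 1
      ext x
      by_cases hS : x ∈ S
      · simp [hS, hp hS]
      · simp [hS]
    · rintro ⟨A, S⟩ hp
      simp only [mem_sigma, mem_univ, mem_powerset, true_and] at hp
      simp [union_sdiff_of_subset hp]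
  have halt : ∀ A : Finset ι, ∑ S ∈ A.powerset, (-1 : ℝ) ^ #S = if A = ∅ then 1 else 0 := by
    intro A
    exact_mod_cast sum_powerset_neg_one_pow_card (x := A)
  simp only [hoeffdingTerm, hreindex, ← sum_mul, halt, ite_mul, one_mul, zero_mul,
    sum_ite_eq', mem_univ, if_true]

lemma sum_sum_ite_mem_inv_card_mul (c : Finset ι → ℝ) :
    ∑ J : Finset ι, ∑ j, (if j ∈ J then (#J : ℝ)⁻¹ * c J else 0) = ∑ J, c J - c ∅ := by
  have hcount : ∀ J : Finset ι,
      ∑ j, (if j ∈ J then (#J : ℝ)⁻¹ * c J else 0) = c J - if J = ∅ then c J else 0 := by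
    intro J
    rw [sum_ite_mem, univ_inter, sum_const, nsmul_eq_mul]
    rcases eq_or_ne J ∅ with rfl | hJ
    · simp
    · rw [if_neg hJ, sub_zero, mul_inv_cancel_left₀ (by simpa using hJ)]
  simp only [hcount, sum_sub_distrib, sum_ite_eq', mem_univ, if_true]

end HoeffdingTerm

section Glauber

variable (μ : ∀ i, Measure (Z i)) [∀ i, IsProbabilityMeasure (μ i)] {f g : (∀ i, Z i) → ℝ}

lemma integrateOut_hoeffdingTerm (S J : Finset ι) {F : Finset ι → (∀ i, Z i) → ℝ}
    (hF : ∀ U, BoundedMeasurable (F U)) (ω : ∀ i, Z i) :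
    integrateOut μ S (fun η => hoeffdingTerm (fun U => F U η) J) ω
      = hoeffdingTerm (fun U => integrateOut μ S (F U) ω) J := by
  simp only [integrateOut, hoeffdingTerm]
  rw [integral_finsetSum _ fun U _ => ((hF _).comp_finset_piecewise S ω).integrable.const_mul _]
  simp only [integral_const_mul]

lemma glauberPiJ_eq_hoeffdingTerm (J : Finset ι) (hf : Measurable f) (ω : ∀ i, Z i) :
    glauberPiJ μ J f ω = hoeffdingTerm (fun U => integrateOut μ U f ω) J := by
  simp only [glauberPiJ, hoeffdingTerm, partialE_eq_integrateOut μ _ hf]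

lemma boundedMeasurable_glauberPiJ (J : Finset ι) (hf : BoundedMeasurable f) :
    BoundedMeasurable (glauberPiJ μ J f) := by
  rw [funext (glauberPiJ_eq_hoeffdingTerm μ J hf.1)]
  exact .finset_sum _ fun S _ =>
    (BoundedMeasurable.const _).mul (boundedMeasurable_integrateOut μ _ hf)

lemma boundedMeasurable_glauberD (j : ι) (hf : BoundedMeasurable f) :
    BoundedMeasurable (glauberD μ j f) := by
  rw [glauberD_eq_sub_integrateOut μ j hf.1]
  exact hf.sub (boundedMeasurable_integrateOut μ _ hf)

lemma glauberPiJ_empty (hf : Measurable f) (ω : ∀ i, Z i) :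
    glauberPiJ μ ∅ f ω = ∫ ω', f ω' ∂Measure.pi μ := by
  rw [glauberPiJ_eq_hoeffdingTerm μ ∅ hf, hoeffdingTerm_empty, integrateOut_univ]

lemma sum_glauberPiJ (hf : Measurable f) (ω : ∀ i, Z i) : ∑ J, glauberPiJ μ J f ω = f ω := by
  simp only [glauberPiJ_eq_hoeffdingTerm μ _ hf, sum_hoeffdingTerm, integrateOut_empty]

lemma integrateOut_glauberPiJ_of_mem (hf : BoundedMeasurable f) {J : Finset ι} {j : ι}
    (hj : j ∈ J) (ω : ∀ i, Z i) : integrateOut μ {j} (glauberPiJ μ J f) ω = 0 := by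
  rw [funext (glauberPiJ_eq_hoeffdingTerm μ J hf.1),
    integrateOut_hoeffdingTerm μ _ _ fun U => boundedMeasurable_integrateOut μ U hf]
  simp only [integrateOut_integrateOut μ _ _ hf, union_singleton]
  exact hoeffdingTerm_insert_of_mem (fun U => integrateOut μ U f ω) hj

lemma glauberPiJ_glauberD (hf : BoundedMeasurable f) (J : Finset ι) (j : ι) (ω : ∀ i, Z i) :
    glauberPiJ μ J (glauberD μ j f) ω = if j ∈ J then glauberPiJ μ J f ω else 0 := by
  have hD : ∀ U, integrateOut μ U (glauberD μ j f) ω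
      = integrateOut μ U f ω - integrateOut μ (insert j U) f ω := by
    intro U
    rw [glauberD_eq_sub_integrateOut μ j hf.1,
      integrateOut_sub μ U hf (boundedMeasurable_integrateOut μ _ hf),
      integrateOut_integrateOut μ _ _ hf, ← insert_eq]
  rw [glauberPiJ_eq_hoeffdingTerm μ J (boundedMeasurable_glauberD μ j hf).1,
    glauberPiJ_eq_hoeffdingTerm μ J hf.1]
  simp only [hD, hoeffdingTerm_sub]
  split_ifs with hj
  · rw [hoeffdingTerm_insert_of_mem (fun U => integrateOut μ U f ω) hj, sub_zero]
  · rw [hoeffdingTerm_insert_of_notMem (fun U => integrateOut μ U f ω) hj, sub_self]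

lemma integral_glauberD_mul_glauberPiJ (hf : BoundedMeasurable f) (hg : BoundedMeasurable g)
    {J : Finset ι} {j : ι} (hj : j ∈ J) :
    ∫ ω, glauberD μ j f ω * glauberPiJ μ J g ω ∂Measure.pi μ
      = ∫ ω, f ω * glauberPiJ μ J g ω ∂Measure.pi μ := by
  have hP := boundedMeasurable_glauberPiJ μ J hg
  have hE : ∫ ω, integrateOut μ {j} f ω * glauberPiJ μ J g ω ∂Measure.pi μ = 0 := by
    simp [integral_integrateOut_mul_comm μ {j} hf hP, integrateOut_glauberPiJ_of_mem μ hg hj]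
  simp only [glauberD_eq_sub_integrateOut μ j hf.1, sub_mul]
  rw [integral_sub (hf.mul hP).integrable
    ((boundedMeasurable_integrateOut μ _ hf).mul hP).integrable, hE, sub_zero]

lemma glauberT_eq_sum (g : (∀ i, Z i) → ℝ) (ω : ∀ i, Z i) :
    glauberT μ g ω = ∑ J : Finset ι, (#J : ℝ)⁻¹ * glauberPiJ μ J g ω := by
  have hcard : ∀ J ∈ (univ : Finset (Finset ι)), #J ∈ Icc 0 (Fintype.card ι) :=
    fun J _ => mem_Icc.2 ⟨Nat.zero_le _, card_le_univ J⟩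
  -- The chaos `n = 0` carries the coefficient `(0 : ℝ)⁻¹ = 0`.
  rw [← sum_fiberwise_of_maps_to hcard, glauberT,
    sum_subset (Icc_subset_Icc_left zero_le_one) fun n _ hn => ?_]
  · refine sum_congr rfl fun n _ => ?_
    rw [glauberPi, powerset_univ, mul_sum]
    exact sum_congr rfl fun J hJ => by rw [(mem_filter.1 hJ).2]
  · obtain rfl : n = 0 := by simp_all
    simp

lemma integral_glauberD_mul_glauberT_glauberD (hf : BoundedMeasurable f)
    (hg : BoundedMeasurable g) (j : ι) :
    ∫ ω, glauberD μ j f ω * glauberT μ (glauberD μ j g) ω ∂Measure.pi μ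
      = ∑ J, if j ∈ J then (#J : ℝ)⁻¹ * ∫ ω, f ω * glauberPiJ μ J g ω ∂Measure.pi μ else 0 := by
  have hpt : ∀ ω, glauberD μ j f ω * glauberT μ (glauberD μ j g) ω
      = ∑ J, (if j ∈ J then (#J : ℝ)⁻¹ else 0) * (glauberD μ j f ω * glauberPiJ μ J g ω) := by
    intro ω
    rw [glauberT_eq_sum, mul_sum]
    refine sum_congr rfl fun J _ => ?_
    rw [glauberPiJ_glauberD μ hg]
    split_ifs <;> ring
  simp only [hpt]
  rw [integral_finsetSum _ fun J _ => ((boundedMeasurable_glauberD μ j hf).mul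
    (boundedMeasurable_glauberPiJ μ J hg)).integrable.const_mul _]
  refine sum_congr rfl fun J _ => ?_
  rw [integral_const_mul]
  split_ifs with hj
  · rw [integral_glauberD_mul_glauberPiJ μ hf hg hj]
  · exact zero_mul _

lemma integral_mul_eq_sum_integral_mul_glauberPiJ (hf : BoundedMeasurable f)
    (hg : BoundedMeasurable g) :
    ∫ ω, f ω * g ω ∂Measure.pi μ = ∑ J, ∫ ω, f ω * glauberPiJ μ J g ω ∂Measure.pi μ := by
  rw [← integral_finsetSum _ fun J _ => (hf.mul (boundedMeasurable_glauberPiJ μ J hg)).integrable]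
  simp only [← mul_sum, sum_glauberPiJ μ hg.1]

end Glauber

/-- **Helffer–Sjöstrand representation formula**: for all `Y, Y' ∈ L²(Ω)`,
`Cov[Y, Y'] = ∑ j E[(D_j Y) T(D_j Y')]`, where `T` is the pseudo-inverse of the
Glauber Laplacian. -/
theorem helffer_sjostrand
    (μ : ∀ i, Measure (Z i)) [∀ i, IsProbabilityMeasure (μ i)]
    (Y Y' : (∀ i, Z i) → ℝ)
    (hY : Measurable Y) (hYb : ∃ M, ∀ ω, |Y ω| ≤ M)
    (hY' : Measurable Y') (hY'b : ∃ M, ∀ ω, |Y' ω| ≤ M) :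
    (∫ ω, Y ω * Y' ω ∂(Measure.pi μ))
        - (∫ ω, Y ω ∂(Measure.pi μ)) * (∫ ω, Y' ω ∂(Measure.pi μ))
      = ∑ j, ∫ ω, glauberD μ j Y ω * glauberT μ (glauberD μ j Y') ω ∂(Measure.pi μ) := by
  have hYbd : BoundedMeasurable Y := ⟨hY, hYb⟩
  have hY'bd : BoundedMeasurable Y' := ⟨hY', hY'b⟩
  have hmean : ∫ ω, Y ω * glauberPiJ μ ∅ Y' ω ∂Measure.pi μ
      = (∫ ω, Y ω ∂Measure.pi μ) * ∫ ω, Y' ω ∂Measure.pi μ := by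
    simp only [glauberPiJ_empty μ hY']
    exact integral_mul_const _ _
  simp only [integral_glauberD_mul_glauberT_glauberD μ hYbd hY'bd]
  rw [sum_comm, sum_sum_ite_mem_inv_card_mul,
    integral_mul_eq_sum_integral_mul_glauberPiJ μ hYbd hY'bd, hmean]
end
end

section
/- For all real a, b and complex ω with ω ≠ 0: (a + b·Re ω)² + (b·Im ω)² ≥ (a² + b²|ω|²)(1 − |Re ω|/|ω|). -/
/-- For all real `a, b` and complex `ω ≠ 0`:
`(a + b·Re ω)² + (b·Im ω)² ≥ (a² + b²|ω|²)(1 - |Re ω|/|ω|)`. -/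
theorem elementary_complex_inequality (a b : ℝ) (ω : ℂ) (hω : ω ≠ 0) :
    (a ^ 2 + b ^ 2 * ‖ω‖ ^ 2) * (1 - |ω.re| / ‖ω‖)
      ≤ (a + b * ω.re) ^ 2 + (b * ω.im) ^ 2 := by
  have hr : 0 < ‖ω‖ := norm_pos_iff.mpr hω
  have hsq : b ^ 2 * ω.re ^ 2 + b ^ 2 * ω.im ^ 2 = b ^ 2 * ‖ω‖ ^ 2 := by
    rw [Complex.sq_norm, Complex.normSq_apply]; ring
  set t := |ω.re| / ‖ω‖ with htdef
  have ht0 : 0 ≤ t := div_nonneg (abs_nonneg _) hr.le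
  have hx : |ω.re| = t * ‖ω‖ := (div_mul_cancel₀ _ hr.ne').symm
  have h5 : -(|a| * |b| * (t * ‖ω‖)) ≤ a * b * ω.re := by
    rw [← hx]
    calc -(|a| * |b| * |ω.re|) = -|a * b * ω.re| := by rw [abs_mul, abs_mul]
    _ ≤ a * b * ω.re := neg_abs_le _
  have key : 0 ≤ t * (a ^ 2 - 2 * |a| * |b| * ‖ω‖ + b ^ 2 * ‖ω‖ ^ 2) :=
    mul_nonneg ht0 (by nlinarith [sq_nonneg (|a| - |b| * ‖ω‖), sq_abs a, sq_abs b])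
  nlinarith [key, h5, hsq]
end

section
/- Explicit resolvent of the one-particle linearized Vlasov operator in Fourier space: for ω ∈ ℂ∖ℝ, k fixed with ε°(k,ω) ≠ 0, and Ĥ an integrable function of v, the function Ĝ := Ĥ/(k·v − ω) + (V̂(k)/ε°(k,ω)) · (k·∇f°(v)/(k·v − ω)) · ⟨Ĥ/(k·v − ω)⟩_v solves (k·v − ω) Ĝ − V̂(k) k·∇f°(v) ⟨Ĝ⟩_v = Ĥ, and moreover ⟨Ĝ⟩_v = (1/ε°(k,ω)) ⟨Ĥ/(k·v − ω)⟩_v. -/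
open MeasureTheory

noncomputable section

variable {d : ℕ}

/-- `k · v` for a Fourier mode `k ∈ ℤ^d` and a velocity `v ∈ ℝ^d`. -/
def kdot (k : Fin d → ℤ) (v : Fin d → ℝ) : ℝ := ∑ i, (k i : ℝ) * v i

/-- `k · ∇f(v)`. -/
def kgrad (k : Fin d → ℤ) (f : (Fin d → ℝ) → ℝ) (v : Fin d → ℝ) : ℝ :=
  ∑ i, (k i : ℝ) * fderiv ℝ f v (Pi.single i 1)

/-- The dispersion function `ε°(k, ω) := 1 - V̂(k) ⟨ k·∇f°(v) / (k·v - ω) ⟩_v`. -/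
def dispersion (Vhat : (Fin d → ℤ) → ℝ) (f : (Fin d → ℝ) → ℝ)
    (k : Fin d → ℤ) (ω : ℂ) : ℂ :=
  1 - (Vhat k : ℂ) * ∫ v : Fin d → ℝ, (kgrad k f v : ℂ) / ((kdot k v : ℂ) - ω)

/-- The explicit resolvent candidate
`Ĝ := Ĥ/(k·v - ω) + (V̂(k)/ε°(k,ω)) · (k·∇f°(v)/(k·v - ω)) · ⟨Ĥ/(k·v - ω)⟩_v`. -/
def resolventG (Vhat : (Fin d → ℤ) → ℝ) (f : (Fin d → ℝ) → ℝ)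
    (k : Fin d → ℤ) (ω : ℂ) (H : (Fin d → ℝ) → ℂ) : (Fin d → ℝ) → ℂ :=
  fun v => H v / ((kdot k v : ℂ) - ω)
    + ((Vhat k : ℂ) / dispersion Vhat f k ω) * ((kgrad k f v : ℂ) / ((kdot k v : ℂ) - ω))
      * ∫ w : Fin d → ℝ, H w / ((kdot k w : ℂ) - ω)

/-- **Explicit resolvent of the one-particle linearized Vlasov operator in Fourier
space**: for `ω ∈ ℂ∖ℝ`, `k` with `ε°(k,ω) ≠ 0`, and integrable `Ĥ`, the function `Ĝ`
solves `(k·v - ω) Ĝ - V̂(k) k·∇f°(v) ⟨Ĝ⟩_v = Ĥ`, and moreover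
`⟨Ĝ⟩_v = ε°(k,ω)⁻¹ ⟨Ĥ/(k·v - ω)⟩_v`. -/
theorem resolvent_linearized_vlasov
    (Vhat : (Fin d → ℤ) → ℝ) (f : (Fin d → ℝ) → ℝ) (hf : Differentiable ℝ f)
    (hf1 : Integrable f) (hf1' : Integrable (fun v => ‖fderiv ℝ f v‖))
    (k : Fin d → ℤ) (ω : ℂ) (hω : ω.im ≠ 0)
    (hε : dispersion Vhat f k ω ≠ 0)
    (H : (Fin d → ℝ) → ℂ) (hH : Integrable H) :
    (∀ v : Fin d → ℝ,
        ((kdot k v : ℂ) - ω) * resolventG Vhat f k ω H v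
          - (Vhat k : ℂ) * (kgrad k f v : ℂ)
            * ∫ w : Fin d → ℝ, resolventG Vhat f k ω H w
        = H v) ∧
    (∫ w : Fin d → ℝ, resolventG Vhat f k ω H w)
      = (dispersion Vhat f k ω)⁻¹ * ∫ w : Fin d → ℝ, H w / ((kdot k w : ℂ) - ω) := by
  -- denominator nonzero
  have hden : ∀ v : Fin d → ℝ, ((kdot k v : ℂ) - ω) ≠ 0 := by
    intro v h
    apply hω
    have := congrArg Complex.im h
    simpa using this.symm
  have hdenn : ∀ v : Fin d → ℝ, |ω.im| ≤ ‖(kdot k v : ℂ) - ω‖ := by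
    intro v
    have : |((kdot k v : ℂ) - ω).im| ≤ ‖(kdot k v : ℂ) - ω‖ := Complex.abs_im_le_norm _
    simpa using this
  -- continuity / measurability of the inverse denominator
  have hcont : Continuous fun v : Fin d → ℝ => ((kdot k v : ℂ) - ω)⁻¹ := by
    apply Continuous.inv₀ _ hden
    exact (Complex.continuous_ofReal.comp (by unfold kdot; continuity)).sub continuous_const
  have hinvbd : ∀ v : Fin d → ℝ, ‖((kdot k v : ℂ) - ω)⁻¹‖ ≤ |ω.im|⁻¹ := by
    intro v
    rw [norm_inv]
    exact inv_anti₀ (abs_pos.mpr hω) (hdenn v)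
  -- Integrability of H / denom
  have hHint : Integrable (fun v => H v / ((kdot k v : ℂ) - ω)) := by
    have := (hH.bdd_mul hcont.aestronglyMeasurable (Filter.Eventually.of_forall hinvbd))
    simpa [div_eq_mul_inv, mul_comm] using this
  -- Integrability of kgrad
  have hkg_meas : AEStronglyMeasurable (fun v : Fin d → ℝ => (kgrad k f v : ℂ)) volume := by
    apply Continuous.comp_aestronglyMeasurable Complex.continuous_ofReal
    unfold kgrad
    apply (Finset.aestronglyMeasurable_fun_sum _ _)
    intro i _
    exact ((measurable_fderiv_apply_const ℝ f (Pi.single i 1)).const_mul _).aestronglyMeasurable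
  have hkg_int : Integrable (fun v : Fin d → ℝ => (kgrad k f v : ℂ)) := by
    apply Integrable.mono' (g := fun v => (∑ i, |(k i : ℝ)|) * ‖fderiv ℝ f v‖)
      (hf1'.const_mul _) hkg_meas
    filter_upwards with v
    rw [Complex.norm_real]
    unfold kgrad
    calc ‖∑ i, (k i : ℝ) * fderiv ℝ f v (Pi.single i 1)‖
        ≤ ∑ i, ‖(k i : ℝ) * fderiv ℝ f v (Pi.single i 1)‖ := norm_sum_le _ _
      _ ≤ ∑ i, |(k i : ℝ)| * ‖fderiv ℝ f v‖ := by
          apply Finset.sum_le_sum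
          intro i _
          rw [norm_mul, Real.norm_eq_abs]
          gcongr
          calc ‖fderiv ℝ f v (Pi.single i 1)‖ ≤ ‖fderiv ℝ f v‖ * ‖(Pi.single i 1 : Fin d → ℝ)‖ :=
                (fderiv ℝ f v).le_opNorm _
            _ ≤ ‖fderiv ℝ f v‖ * 1 := by gcongr; simp [Pi.norm_single]
            _ = ‖fderiv ℝ f v‖ := mul_one _
      _ = (∑ i, |(k i : ℝ)|) * ‖fderiv ℝ f v‖ := by rw [Finset.sum_mul]
  have hkgd_int : Integrable (fun v => (kgrad k f v : ℂ) / ((kdot k v : ℂ) - ω)) := by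
    have := (hkg_int.bdd_mul hcont.aestronglyMeasurable (Filter.Eventually.of_forall hinvbd))
    simpa [div_eq_mul_inv, mul_comm] using this
  set I := ∫ w : Fin d → ℝ, H w / ((kdot k w : ℂ) - ω) with hI
  set J := ∫ v : Fin d → ℝ, (kgrad k f v : ℂ) / ((kdot k v : ℂ) - ω) with hJ
  set ε := dispersion Vhat f k ω with hεdef
  have hεeq : (Vhat k : ℂ) * J = 1 - ε := by rw [hεdef]; unfold dispersion; rw [← hJ]; ring
  have hGint : Integrable (resolventG Vhat f k ω H) := by
    unfold resolventG
    exact hHint.add ((hkgd_int.const_mul _).mul_const I)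
  have hintG : (∫ w : Fin d → ℝ, resolventG Vhat f k ω H w) = ε⁻¹ * I := by
    unfold resolventG
    rw [integral_add hHint ((hkgd_int.const_mul _).mul_const I), ← hI,
      integral_mul_const, integral_const_mul, ← hJ, ← hεdef]
    field_simp
    linear_combination I * hεeq
  refine ⟨fun v => ?_, hintG⟩
  rw [hintG]
  unfold resolventG
  rw [← hI, ← hεdef]
  have hdv := hden v
  field_simp
  ring_nf
end
end
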